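/- Let k = 2, T = 2π, ψ(t, (x₁, x₂)) = (−x₂, x₁) (so that Ω(t, 0, ξ) = e^{tA} ξ is the counterclockwise rotation of ξ by angle t, where A is the matrix with rows (0, −1) and (1, 0)), and let φ(t, (x₁, x₂)) = (0, f(t, −x₁, x₂)) where f : ℝ × ℝ × ℝ → ℝ is continuous and 2π-periodic in its first variable. For a, θ ∈ ℝ set ξ(a, θ) = (−a cos θ, a sin θ). Then for every s ∈ ℝ: η(2π, s, ξ(a,θ)) − η(0, s, ξ(a,θ)) = R(θ) H(a, θ), where R(θ) is the matrix with rows (cos θ, sin θ) and (−sin θ, cos θ), and H(a, θ) = ∫₀^{2π} ( sin τ · f(τ+θ, a cos τ, −a sin τ), cos τ · f(τ+θ, a cos τ, −a sin τ) ) dτ. In particular the left-hand side does not depend on s. -/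

import Mathlib

/-!
Write `R(t) = rotMat t = e^{-tA}`. Since `R' = -R A`, for any solution of `ẏ = b + A y` one has
`(R y)' = R b`, so `R(t) y(t)` is a primitive of `R(t) b(t)` and, as `R(2π) = R(0) = 1`,
`y(2π) - y(0) = ∫₀^{2π} R(t) b(t) dt`; this is why the left-hand side does not depend on `s`.
Along the rotated orbit of `ξ(a,θ)` the forcing is `b(t) = (0, g(t - θ))` with
`g(τ) = f(τ+θ, a cos τ, -a sin τ)`, and `R(t) = R(θ) R(t - θ)`. Pulling `R(θ)` out of the
integral and shifting the variable by `θ`, which periodicity allows, leaves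
`∫₀^{2π} R(τ) (0, g τ) dτ = H(a,θ)`.
-/

/-- The point of `ℝ²` with polar-type coordinates `ξ(a,θ) = (-a cos θ, a sin θ)`. -/
noncomputable def xiFun (a θ : ℝ) : EuclideanSpace ℝ (Fin 2) :=
  WithLp.toLp 2 ![-(a * Real.cos θ), a * Real.sin θ]

/-- The matrix with rows `(cos θ, sin θ)` and `(-sin θ, cos θ)` acting on `ℝ²`. -/
noncomputable def rotMat (θ : ℝ) (v : EuclideanSpace ℝ (Fin 2)) : EuclideanSpace ℝ (Fin 2) :=
  WithLp.toLp 2 ![Real.cos θ * v 0 + Real.sin θ * v 1, -Real.sin θ * v 0 + Real.cos θ * v 1]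

/-- `H(a,θ) = ∫₀^{2π} (sin τ · f(τ+θ, a cos τ, -a sin τ), cos τ · f(τ+θ, a cos τ, -a sin τ)) dτ`. -/
noncomputable def Hfun (f : ℝ → ℝ → ℝ → ℝ) (a θ : ℝ) : EuclideanSpace ℝ (Fin 2) :=
  ∫ τ in (0 : ℝ)..(2 * Real.pi),
    (WithLp.toLp 2 ![Real.sin τ * f (τ + θ) (a * Real.cos τ) (-(a * Real.sin τ)),
       Real.cos τ * f (τ + θ) (a * Real.cos τ) (-(a * Real.sin τ))] :
      EuclideanSpace ℝ (Fin 2))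

local notation "E²" => EuclideanSpace ℝ (Fin 2)

noncomputable def quarterTurn : E² →L[ℝ] E² :=
  LinearMap.toContinuousLinearMap
    { toFun := fun v => WithLp.toLp 2 ![-(v 1), v 0]
      map_add' := fun x y => by ext i; fin_cases i <;> simp; ring
      map_smul' := fun c x => by ext i; fin_cases i <;> simp }

@[simp] lemma quarterTurn_apply (v : E²) : quarterTurn v = WithLp.toLp 2 ![-(v 1), v 0] := rfl

@[simp] lemma quarterTurn_quarterTurn (v : E²) : quarterTurn (quarterTurn v) = -v := by
  ext i; fin_cases i <;> simp

lemma rotMat_eq (θ : ℝ) (v : E²) :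
    rotMat θ v = Real.cos θ • v - Real.sin θ • quarterTurn v := by
  ext i; fin_cases i <;> simp [rotMat]; ring

lemma rotMat_add (θ τ : ℝ) (v : E²) : rotMat (θ + τ) v = rotMat θ (rotMat τ v) := by
  ext i; fin_cases i <;> simp [rotMat, Real.cos_add, Real.sin_add] <;> ring

@[simp] lemma rotMat_zero (v : E²) : rotMat 0 v = v := by simp [rotMat_eq]

@[simp] lemma rotMat_two_pi (v : E²) : rotMat (2 * Real.pi) v = v := by simp [rotMat_eq]

lemma rotMat_periodic (v : E²) : Function.Periodic (fun θ => rotMat θ v) (2 * Real.pi) := by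
  intro θ; simp [rotMat_eq]

noncomputable def rotCLM (θ : ℝ) : E² →L[ℝ] E² :=
  Real.cos θ • ContinuousLinearMap.id ℝ E² - Real.sin θ • quarterTurn

@[simp] lemma rotCLM_apply (θ : ℝ) (v : E²) : rotCLM θ v = rotMat θ v := by
  simp [rotCLM, rotMat_eq]

lemma Continuous.rotMat {α : Type*} [TopologicalSpace α] {u : α → ℝ} {v : α → E²}
    (hu : Continuous u) (hv : Continuous v) : Continuous fun x => _root_.rotMat (u x) (v x) := by
  simp only [rotMat_eq]; fun_prop

lemma HasDerivAt.rotMat {y : ℝ → E²} {y' : E²} {t : ℝ} (hy : HasDerivAt y y' t) :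
    HasDerivAt (fun u => _root_.rotMat u (y u)) (_root_.rotMat t (y' - quarterTurn (y t))) t := by
  simp only [rotMat_eq]
  have hAy := quarterTurn.hasFDerivAt.comp_hasDerivAt t hy
  refine (((Real.hasDerivAt_cos t).smul hy).sub ((Real.hasDerivAt_sin t).smul hAy)).congr_deriv ?_
  simp only [Function.comp_apply, map_sub, quarterTurn_quarterTurn]
  module

lemma rotMat_sub_rotMat_eq_integral {y b : ℝ → E²} (hb : Continuous b)
    (hy : ∀ t, HasDerivAt y (b t + quarterTurn (y t)) t) (a c : ℝ) :
    rotMat c (y c) - rotMat a (y a) = ∫ t in a..c, rotMat t (b t) := by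
  refine (intervalIntegral.integral_eq_sub_of_hasDerivAt (f := fun u => rotMat u (y u))
    (fun t _ => ?_) ?_).symm
  · simpa using (hy t).rotMat
  · exact (continuous_id.rotMat hb).intervalIntegrable _ _

lemma Function.Periodic.intervalIntegral_comp_sub_right {E : Type*} [NormedAddCommGroup E]
    [NormedSpace ℝ E] {F : ℝ → E} {T : ℝ} (hF : Function.Periodic F T) (c d : ℝ) :
    ∫ t in c..c + T, F (t - d) = ∫ t in c..c + T, F t := by
  rw [intervalIntegral.integral_comp_sub_right, ← sub_add_eq_add_sub]
  exact hF.intervalIntegral_add_eq (c - d) c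

section

variable (f : ℝ → ℝ → ℝ → ℝ) (a θ : ℝ)

noncomputable def HfunIntegrand (τ : ℝ) : E² :=
  rotMat τ (WithLp.toLp 2 ![0, f (τ + θ) (a * Real.cos τ) (-(a * Real.sin τ))])

lemma Hfun_eq_integral_HfunIntegrand :
    Hfun f a θ = ∫ τ in (0 : ℝ)..(2 * Real.pi), HfunIntegrand f a θ τ := by
  unfold Hfun
  congr 1 with τ i
  fin_cases i <;> simp [HfunIntegrand, rotMat]

variable {f}

lemma continuous_HfunIntegrand (hf : Continuous fun p : ℝ × ℝ × ℝ => f p.1 p.2.1 p.2.2) :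
    Continuous (HfunIntegrand f a θ) := by
  have hg : Continuous fun τ => f (τ + θ) (a * Real.cos τ) (-(a * Real.sin τ)) :=
    hf.comp (by fun_prop : Continuous fun τ : ℝ =>
      (τ + θ, a * Real.cos τ, -(a * Real.sin τ)))
  exact continuous_id.rotMat (by fun_prop)

lemma HfunIntegrand_periodic (hfT : ∀ t u v, f (t + 2 * Real.pi) u v = f t u v) :
    Function.Periodic (HfunIntegrand f a θ) (2 * Real.pi) := by
  intro τ
  simp only [HfunIntegrand, add_right_comm τ _ θ, hfT, Real.cos_add_two_pi, Real.sin_add_two_pi]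
  exact rotMat_periodic _ τ

end

lemma phi_flow_xiFun_eq {f : ℝ → ℝ → ℝ → ℝ}
    {φ : ℝ → E² → E²} {Ω : ℝ → ℝ → E² → E²}
    (hφdef : ∀ t v, φ t v = ![0, f t (-(v 0)) (v 1)])
    (hΩrot : ∀ t ξ, Ω t 0 ξ =
      ![Real.cos t * ξ 0 - Real.sin t * ξ 1, Real.sin t * ξ 0 + Real.cos t * ξ 1])
    (a θ t : ℝ) :
    φ t (Ω t 0 (xiFun a θ)) =
      WithLp.toLp 2 ![0, f t (a * Real.cos (t - θ)) (-(a * Real.sin (t - θ)))] := by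
  apply WithLp.ofLp_injective
  rw [hφdef, hΩrot]
  simp [xiFun, Real.cos_sub, Real.sin_sub]
  congr 1 <;> ring

theorem eta_difference_eq_rot_H_general
    (f : ℝ → ℝ → ℝ → ℝ)
    (hf : Continuous fun p : ℝ × ℝ × ℝ => f p.1 p.2.1 p.2.2)
    (hfT : ∀ t u v, f (t + 2 * Real.pi) u v = f t u v)
    (φ ψ : ℝ → EuclideanSpace ℝ (Fin 2) → EuclideanSpace ℝ (Fin 2))
    (hψdef : ∀ t v, ψ t v = ![-(v 1), v 0])
    (hφdef : ∀ t v, φ t v = ![0, f t (-(v 0)) (v 1)])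
    -- `Ω (·) t₀ ξ` is the solution of `ẋ = ψ(t,x)`, `x(t₀) = ξ`; here the rotation by angle `t`
    (Ω : ℝ → ℝ → EuclideanSpace ℝ (Fin 2) → EuclideanSpace ℝ (Fin 2))
    (hΩrot : ∀ t ξ, Ω t 0 ξ =
      ![Real.cos t * ξ 0 - Real.sin t * ξ 1, Real.sin t * ξ 0 + Real.cos t * ξ 1])
    -- `η (·) s ξ` is the solution of the linear system (2) with `y(s) = 0`
    (η : ℝ → ℝ → EuclideanSpace ℝ (Fin 2) → EuclideanSpace ℝ (Fin 2))
    (hη : ∀ t s ξ, HasDerivAt (fun u => η u s ξ)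
      (φ t (Ω t 0 ξ) + fderiv ℝ (fun x => ψ t x) (Ω t 0 ξ) (η t s ξ)) t) :
    ∀ (s a θ : ℝ),
      η (2 * Real.pi) s (xiFun a θ) - η 0 s (xiFun a θ) = rotMat θ (Hfun f a θ) := by
  intro s a θ
  have hψ : ∀ t, ψ t = quarterTurn := fun t =>
    funext fun v => WithLp.ofLp_injective 2 (hψdef t v)
  have hy := fun t => hη t s (xiFun a θ)
  simp only [hψ, ContinuousLinearMap.fderiv] at hy
  have hb := phi_flow_xiFun_eq hφdef hΩrot a θ
  have hF := continuous_HfunIntegrand a θ hf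
  have hb_cont : Continuous fun t => φ t (Ω t 0 (xiFun a θ)) := by
    simp only [hb]
    have hg := hf.comp (by fun_prop : Continuous fun t : ℝ =>
      (t, a * Real.cos (t - θ), -(a * Real.sin (t - θ))))
    fun_prop
  calc η (2 * Real.pi) s (xiFun a θ) - η 0 s (xiFun a θ)
      = ∫ t in (0 : ℝ)..(2 * Real.pi), rotMat t (φ t (Ω t 0 (xiFun a θ))) := by
        simpa using rotMat_sub_rotMat_eq_integral hb_cont hy 0 (2 * Real.pi)
    _ = ∫ t in (0 : ℝ)..(2 * Real.pi), rotCLM θ (HfunIntegrand f a θ (t - θ)) := by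
        simp only [hb, rotCLM_apply, HfunIntegrand, ← rotMat_add, add_sub_cancel, sub_add_cancel]
    _ = rotCLM θ (∫ t in (0 : ℝ)..(2 * Real.pi), HfunIntegrand f a θ (t - θ)) :=
        (rotCLM θ).intervalIntegral_comp_comm
          ((hF.comp (continuous_sub_right θ)).intervalIntegrable _ _)
    _ = rotMat θ (Hfun f a θ) := by
        rw [Hfun_eq_integral_HfunIntegrand, rotCLM_apply]
        congr 1
        simpa using (HfunIntegrand_periodic a θ hfT).intervalIntegral_comp_sub_right 0 θ

/-- For `ψ(t,(x₁,x₂)) = (-x₂,x₁)` (so `Ω(t,0,ξ) = e^{tA} ξ` is rotation by angle `t`) and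
`φ(t,(x₁,x₂)) = (0, f(t,-x₁,x₂))` with `f` continuous and `2π`-periodic in time, one has
`η(2π,s,ξ(a,θ)) - η(0,s,ξ(a,θ)) = R(θ) H(a,θ)` for every `s`; in particular the left-hand
side does not depend on `s`. -/
theorem eta_difference_eq_rot_H
    (f : ℝ → ℝ → ℝ → ℝ)
    (hf : Continuous fun p : ℝ × ℝ × ℝ => f p.1 p.2.1 p.2.2)
    (hfT : ∀ t u v, f (t + 2 * Real.pi) u v = f t u v)
    (φ ψ : ℝ → EuclideanSpace ℝ (Fin 2) → EuclideanSpace ℝ (Fin 2))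
    (hψdef : ∀ t v, ψ t v = ![-(v 1), v 0])
    (hφdef : ∀ t v, φ t v = ![0, f t (-(v 0)) (v 1)])
    -- `Ω (·) t₀ ξ` is the solution of `ẋ = ψ(t,x)`, `x(t₀) = ξ`; here the rotation by angle `t`
    (Ω : ℝ → ℝ → EuclideanSpace ℝ (Fin 2) → EuclideanSpace ℝ (Fin 2))
    (hΩ0 : ∀ t₀ ξ, Ω t₀ t₀ ξ = ξ)
    (hΩ' : ∀ t t₀ ξ, HasDerivAt (fun s => Ω s t₀ ξ) (ψ t (Ω t t₀ ξ)) t)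
    (hΩrot : ∀ t ξ, Ω t 0 ξ =
      ![Real.cos t * ξ 0 - Real.sin t * ξ 1, Real.sin t * ξ 0 + Real.cos t * ξ 1])
    -- `η (·) s ξ` is the solution of the linear system (2) with `y(s) = 0`
    (η : ℝ → ℝ → EuclideanSpace ℝ (Fin 2) → EuclideanSpace ℝ (Fin 2))
    (hη0 : ∀ s ξ, η s s ξ = 0)
    (hη : ∀ t s ξ, HasDerivAt (fun u => η u s ξ)
      (φ t (Ω t 0 ξ) + fderiv ℝ (fun x => ψ t x) (Ω t 0 ξ) (η t s ξ)) t) :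
    ∀ (s a θ : ℝ),
      η (2 * Real.pi) s (xiFun a θ) - η 0 s (xiFun a θ) = rotMat θ (Hfun f a θ) :=
  eta_difference_eq_rot_H_general f hf hfT φ ψ hψdef hφdef Ω hΩrot η hη
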